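/- arXiv:2007.00085 — 3 statements merged into one kernel-verified Lean document; each statement's English description precedes it below -/
import Mathlib

section
/- If a policy σ is winning for belief supports b and b', then σ is also winning for the belief support b ∪ b'. -/
open scoped ENNReal Classical

/-- A POMDP: transition function `P` and observation function `obs`. -/
structure POMDP (S Act Ω : Type) where
  P : S → Act → PMF S
  obs : S → Ω

namespace POMDP

variable {S Act Ω : Type}

/-- A history-dependent observation-based policy: maps the observation-action
history and the current observation to a distribution over actions. -/
def Policy (Act Ω : Type) := List (Ω × Act) → Ω → PMF Act

/-- Probability to reach `T` within `n` steps, starting in state `s` with history `h`. -/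
noncomputable def reachN (M : POMDP S Act Ω) (σ : Policy Act Ω) (T : Set S) :
    ℕ → List (Ω × Act) → S → ℝ≥0∞
  | 0, _, s => if s ∈ T then 1 else 0
  | n + 1, h, s =>
    if s ∈ T then 1
    else ∑' α : Act, σ h (M.obs s) α *
      ∑' s' : S, M.P s α s' * M.reachN σ T n (h ++ [(M.obs s, α)]) s'

/-- Probability to eventually reach `T` from initial belief `b` under policy `σ`. -/
noncomputable def prReach (M : POMDP S Act Ω) (σ : Policy Act Ω) (T : Set S)
    (b : PMF S) : ℝ≥0∞ :=
  ⨆ n, ∑' s : S, b s * M.reachN σ T n [] s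

/-- A policy is winning from belief `b`: AVOID reached with probability 0,
REACH reached with probability 1. -/
def WinningPolicyFrom (M : POMDP S Act Ω) (REACH AVOID : Set S)
    (σ : Policy Act Ω) (b : PMF S) : Prop :=
  M.prReach σ AVOID b = 0 ∧ M.prReach σ REACH b = 1

/-- A belief is winning if some winning policy exists from it. -/
def WinningBelief (M : POMDP S Act Ω) (REACH AVOID : Set S) (b : PMF S) : Prop :=
  ∃ σ, M.WinningPolicyFrom REACH AVOID σ b

/-- A set of states is absorbing. -/
def Absorbing (M : POMDP S Act Ω) (T : Set S) : Prop :=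
  ∀ s ∈ T, ∀ α, M.P s α = PMF.pure s

/-- A belief support: a nonempty set of states sharing a common observation. -/
def IsBeliefSupport (M : POMDP S Act Ω) (b : Set S) : Prop :=
  b.Nonempty ∧ ∀ s ∈ b, ∀ s' ∈ b, M.obs s = M.obs s'

/-- A policy is winning from a belief support `b` if it is winning from every
belief whose support is `b`. -/
def WinningFromSupport (M : POMDP S Act Ω) (REACH AVOID : Set S)
    (σ : Policy Act Ω) (b : Set S) : Prop :=
  ∀ β : PMF S, β.support = b → M.WinningPolicyFrom REACH AVOID σ β

/-- A belief support is winning if some policy is winning from it. -/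
def WinningSupport (M : POMDP S Act Ω) (REACH AVOID : Set S) (b : Set S) : Prop :=
  ∃ σ, M.WinningFromSupport REACH AVOID σ b

end POMDP

/-! By monotone convergence, the probability of reaching a target from a belief `β` is the
`β`-average of the reach probabilities of the individual states, and these are at most `1`. So `σ`
is winning from `β` iff every state in the support of `β` is winning under `σ`. Every state of
`b ∪ b'` lies in `b` or in `b'`, and conditioning a belief with support `b ∪ b'` on `b` gives a
belief with support `b`, from which `σ` wins. -/

namespace ENNReal

theorem tsum_iSup_of_monotone {α ι : Type*} [Preorder ι] [IsDirectedOrder ι]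
    {f : α → ι → ℝ≥0∞} (hf : ∀ a, Monotone (f a)) :
    ∑' a, ⨆ i, f a i = ⨆ i, ∑' a, f a i := by
  simp_rw [ENNReal.tsum_eq_iSup_sum, ENNReal.finsetSum_iSup_of_monotone hf]
  exact iSup_comm

end ENNReal

namespace PMF

theorem tsum_mul_eq_one_iff {α : Type*} (β : PMF α) {f : α → ℝ≥0∞} (hf : ∀ a, f a ≤ 1) :
    ∑' a, β a * f a = 1 ↔ ∀ a ∈ β.support, f a = 1 := by
  constructor
  · intro hsum a ha
    by_contra hfa
    have hlt : β a * f a < β a * 1 := by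
      gcongr
      exacts [β.apply_ne_top a, (hf a).lt_of_ne hfa]
    have hle : ∀ x, β x * f x ≤ β x * 1 := fun x => mul_le_mul_right (hf x) _
    have := ENNReal.tsum_lt_tsum (hsum ▸ ENNReal.one_ne_top) hle hlt
    simp only [mul_one, hsum, β.tsum_coe, lt_self_iff_false] at this
  · intro h
    calc ∑' a, β a * f a = ∑' a, β a := tsum_congr fun a => by
          by_cases ha : a ∈ β.support
          · rw [h a ha, mul_one]
          · rw [(β.mem_support_iff a).not_left.mp ha, zero_mul]
      _ = 1 := β.tsum_coe

end PMF

namespace POMDP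

variable {S Act Ω : Type} (M : POMDP S Act Ω) (σ : Policy Act Ω) (T : Set S)

theorem reachN_le_one (n : ℕ) (h : List (Ω × Act)) (s : S) : M.reachN σ T n h s ≤ 1 := by
  induction n generalizing h s with
  | zero => rw [reachN]; split <;> simp
  | succ n ih =>
    rw [reachN]
    split
    · exact le_rfl
    · calc ∑' α, σ h (M.obs s) α * ∑' s', M.P s α s' * M.reachN σ T n _ s'
          ≤ ∑' α, σ h (M.obs s) α * ∑' s', M.P s α s' * 1 := by gcongr; exact ih _ _
        _ = 1 := by simp only [mul_one, PMF.tsum_coe]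

theorem monotone_reachN (h : List (Ω × Act)) (s : S) :
    Monotone fun n => M.reachN σ T n h s := by
  refine monotone_nat_of_le_succ fun n => ?_
  induction n generalizing h s with
  | zero => rw [reachN, reachN]; split <;> simp
  | succ n ih =>
    rw [reachN, reachN]
    split
    · exact le_rfl
    · gcongr; exact ih _ _

noncomputable def reachProb (s : S) : ℝ≥0∞ := ⨆ n, M.reachN σ T n [] s

theorem reachProb_le_one (s : S) : M.reachProb σ T s ≤ 1 :=
  iSup_le fun n => M.reachN_le_one σ T n [] s

theorem prReach_eq_tsum (β : PMF S) : M.prReach σ T β = ∑' s, β s * M.reachProb σ T s := by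
  simp_rw [prReach, reachProb, ENNReal.mul_iSup]
  exact (ENNReal.tsum_iSup_of_monotone fun s =>
    (M.monotone_reachN σ T [] s).const_mul' (β s)).symm

variable (REACH AVOID : Set S)

def WinningState (s : S) : Prop :=
  M.reachProb σ AVOID s = 0 ∧ M.reachProb σ REACH s = 1

variable {M σ REACH AVOID}

theorem prReach_eq_zero_iff {β : PMF S} :
    M.prReach σ T β = 0 ↔ ∀ s ∈ β.support, M.reachProb σ T s = 0 := by
  simp only [prReach_eq_tsum, ENNReal.tsum_eq_zero, mul_eq_zero, PMF.mem_support_iff,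
    or_iff_not_imp_left]

theorem winningPolicyFrom_iff {β : PMF S} :
    M.WinningPolicyFrom REACH AVOID σ β ↔ ∀ s ∈ β.support, M.WinningState σ REACH AVOID s := by
  rw [WinningPolicyFrom, prReach_eq_zero_iff, prReach_eq_tsum,
    β.tsum_mul_eq_one_iff (M.reachProb_le_one σ REACH), ← forall₂_and]
  rfl

theorem WinningFromSupport.winningState {b : Set S} {β : PMF S}
    (h : M.WinningFromSupport REACH AVOID σ b) (hb : b ⊆ β.support) {s : S} (hs : s ∈ b) :
    M.WinningState σ REACH AVOID s := by
  have hsupp : (β.filter b ⟨s, hs, hb hs⟩).support = b := by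
    rw [PMF.support_filter, Set.inter_eq_left.mpr hb]
  exact winningPolicyFrom_iff.mp (h _ hsupp) s (hsupp.symm ▸ hs)

theorem WinningFromSupport.union {b b' : Set S} (h : M.WinningFromSupport REACH AVOID σ b)
    (h' : M.WinningFromSupport REACH AVOID σ b') :
    M.WinningFromSupport REACH AVOID σ (b ∪ b') := by
  intro β hβ
  rw [winningPolicyFrom_iff, hβ]
  rintro s (hs | hs)
  · exact h.winningState (hβ ▸ Set.subset_union_left) hs
  · exact h'.winningState (hβ ▸ Set.subset_union_right) hs

end POMDP

theorem winning_policy_union_general {S Act Ω : Type}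
    (M : POMDP S Act Ω) (REACH AVOID : Set S)
    (b b' : Set S)
    (σ : POMDP.Policy Act Ω)
    (hσ : M.WinningFromSupport REACH AVOID σ b)
    (hσ' : M.WinningFromSupport REACH AVOID σ b') :
    M.WinningFromSupport REACH AVOID σ (b ∪ b') :=
  hσ.union hσ'

/-- If a policy `σ` is winning for belief supports `b` and `b'`
(sharing the same observation), then `σ` is also winning for `b ∪ b'`. -/
theorem winning_policy_union {S Act Ω : Type} [Fintype S] [Fintype Act]
    (M : POMDP S Act Ω) (REACH AVOID : Set S)
    (hdisj : Disjoint REACH AVOID)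
    (hR : M.Absorbing REACH) (hA : M.Absorbing AVOID)
    (b b' : Set S) (hb : M.IsBeliefSupport b) (hb' : M.IsBeliefSupport b')
    (hobs : ∀ s ∈ b, ∀ s' ∈ b', M.obs s = M.obs s')
    (σ : POMDP.Policy Act Ω)
    (hσ : M.WinningFromSupport REACH AVOID σ b)
    (hσ' : M.WinningFromSupport REACH AVOID σ b') :
    M.WinningFromSupport REACH AVOID σ (b ∪ b') :=
  winning_policy_union_general M REACH AVOID b b' σ hσ hσ'
end

section
/- In a finite MDP, if from state s every state reachable under some fixed policy avoids AVOID and has a path of length ≤ |S| to REACH staying within the reached set, and the policy's reached set is finite and closed, then the policy reaches REACH almost surely; conversely, boundedness of the rank by |S| is without loss of generality: if a ranking function with arbitrary real values exists on the reached set, then one with values in {0,…,|S|} exists. -/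
open scoped ENNReal Classical

/-!
The reachability probability `f = mcReach K REACH` equals `1` on `REACH` and satisfies
`f s = ∑' t, K s t * f t` elsewhere. On the finite closed set `C` pick a state where `f` is
minimal: an average of values that are all at least this minimum can only equal it if every
successor attains the minimum too, so the minimum propagates along a path into `REACH`, where
`f = 1`.

A real ranking `r` becomes a natural one bounded by `|S|` through `s ↦ #{u | r u < r s}`,
which is strictly monotone in `r`.
-/

/-- Probability that the Markov chain induced by a memoryless policy `σ` on an
MDP with transitions `P` reaches `T` within `n` steps from `s`. -/
noncomputable def mcReachN {S : Type} (K : S → PMF S) (T : Set S) :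
    ℕ → S → ℝ≥0∞
  | 0, s => if s ∈ T then 1 else 0
  | n + 1, s => if s ∈ T then 1 else ∑' t : S, K s t * mcReachN K T n t

/-- Probability of eventually reaching `T` from `s`. -/
noncomputable def mcReach {S : Type} (K : S → PMF S) (T : Set S) (s : S) : ℝ≥0∞ :=
  ⨆ n, mcReachN K T n s

open Finset

theorem ENNReal.tsum_iSup_of_monotone_s11 {α ι : Type*} [Preorder ι] [IsDirectedOrder ι]
    {f : α → ι → ℝ≥0∞} (hf : ∀ a, Monotone (f a)) :
    ∑' a, ⨆ i, f a i = ⨆ i, ∑' a, f a i := by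
  simp_rw [ENNReal.tsum_eq_iSup_sum, ENNReal.finsetSum_iSup_of_monotone hf]
  exact iSup_comm

theorem PMF.eq_of_tsum_mul_le_of_le {α : Type*} {p : PMF α} {f : α → ℝ≥0∞} {c : ℝ≥0∞}
    (hc : c ≠ ∞) (hle : ∀ a ∈ p.support, c ≤ f a) (hsum : ∑' a, p a * f a ≤ c)
    {a : α} (ha : a ∈ p.support) : f a = c := by
  by_contra hne
  have hlt : p a * c < p a * f a :=
    ENNReal.mul_lt_mul_right ha (p.apply_ne_top a) (lt_of_le_of_ne (hle a ha) (Ne.symm hne))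
  have hmean : ∑' x, p x * c = c := by rw [ENNReal.tsum_mul_right, p.tsum_coe, one_mul]
  have hmono : ∀ x, p x * c ≤ p x * f x := fun x => by
    by_cases hx : x ∈ p.support
    · exact mul_le_mul_right (hle x hx) _
    · simp [(p.apply_eq_zero_iff x).mpr hx]
  have hstrict : c < ∑' x, p x * f x :=
    hmean.symm.trans_lt (ENNReal.tsum_lt_tsum (by rwa [hmean]) hmono hlt)
  exact hstrict.not_ge hsum

theorem Relation.ReflTransGen.of_path {α : Type*} {r : α → α → Prop} {p : ℕ → α} {n : ℕ}
    (h : ∀ i < n, r (p i) (p (i + 1))) : Relation.ReflTransGen r (p 0) (p n) := by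
  induction n with
  | zero => exact .refl
  | succ n ih => exact (ih fun i hi => h i (by omega)).tail (h n (by omega))

theorem card_filter_lt_lt_card_filter_lt {α β : Type*} [Fintype α] [Preorder β] {r : α → β}
    {a b : α} (h : r a < r b) : #{u | r u < r a} < #{u | r u < r b} := by
  refine card_lt_card <| (ssubset_iff_of_subset fun u hu => ?_).mpr ⟨a, ?_, ?_⟩
  · simp only [mem_filter, mem_univ, true_and] at hu ⊢
    exact hu.trans h
  · simpa using h
  · simp

section mcReach

variable {S : Type} {K : S → PMF S} {T : Set S}

theorem mcReachN_le_one (n : ℕ) (s : S) : mcReachN K T n s ≤ 1 := by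
  induction n generalizing s with
  | zero => unfold mcReachN; split <;> simp
  | succ n ih =>
    unfold mcReachN
    split
    · exact le_rfl
    · calc ∑' t, K s t * mcReachN K T n t ≤ ∑' t, K s t :=
            ENNReal.tsum_le_tsum fun t => mul_le_of_le_one_right' (ih t)
        _ = 1 := (K s).tsum_coe

theorem mcReachN_le_succ (n : ℕ) (s : S) : mcReachN K T n s ≤ mcReachN K T (n + 1) s := by
  induction n generalizing s with
  | zero => by_cases h : s ∈ T <;> simp [mcReachN, h]
  | succ n ih =>
    by_cases h : s ∈ T
    · simp [mcReachN, h]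
    · simp only [mcReachN, if_neg h]
      exact ENNReal.tsum_le_tsum fun t => mul_le_mul_right (ih t) _

theorem monotone_mcReachN (s : S) : Monotone fun n => mcReachN K T n s :=
  monotone_nat_of_le_succ fun n => mcReachN_le_succ n s

theorem mcReach_le_one (s : S) : mcReach K T s ≤ 1 :=
  iSup_le fun n => mcReachN_le_one n s

theorem mcReach_of_mem {s : S} (hs : s ∈ T) : mcReach K T s = 1 :=
  le_antisymm (mcReach_le_one s) (le_iSup_of_le 0 (by simp [mcReachN, hs]))

theorem mcReach_of_notMem {s : S} (hs : s ∉ T) :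
    mcReach K T s = ∑' t, K s t * mcReach K T t := by
  calc mcReach K T s = ⨆ n, mcReachN K T (n + 1) s := ((monotone_mcReachN s).iSup_nat_add 1).symm
    _ = ⨆ n, ∑' t, K s t * mcReachN K T n t := by simp only [mcReachN, if_neg hs]
    _ = ∑' t, ⨆ n, K s t * mcReachN K T n t :=
      (ENNReal.tsum_iSup_of_monotone_s11 fun t _ _ hmn =>
        mul_le_mul_right (monotone_mcReachN t hmn) (K s t)).symm
    _ = ∑' t, K s t * mcReach K T t := by simp only [mcReach, ENNReal.mul_iSup]

variable {C : Set S}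

theorem mcReach_eq_of_forall_le (hclosed : ∀ s ∈ C, ∀ t, K s t ≠ 0 → t ∈ C) {a b : S}
    (ha : a ∈ C) (hmin : ∀ c ∈ C, mcReach K T a ≤ mcReach K T c) (hab : K a b ≠ 0) :
    mcReach K T b = mcReach K T a := by
  by_cases haT : a ∈ T
  · rw [mcReach_of_mem haT] at hmin ⊢
    exact le_antisymm (mcReach_le_one b) (hmin b (hclosed a ha b hab))
  · exact PMF.eq_of_tsum_mul_le_of_le (ne_top_of_le_ne_top ENNReal.one_ne_top (mcReach_le_one a))
      (fun t ht => hmin t (hclosed a ha t ht)) (mcReach_of_notMem haT).ge hab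

theorem mcReach_eq_one_of_forall_reflTransGen [Finite S]
    (hclosed : ∀ s ∈ C, ∀ t, K s t ≠ 0 → t ∈ C)
    (hreach : ∀ s ∈ C, ∃ t ∈ T, Relation.ReflTransGen (fun a b => K a b ≠ 0) s t) :
    ∀ s ∈ C, mcReach K T s = 1 := by
  intro s hs
  obtain ⟨a, ha, hmin⟩ := C.exists_min_image (mcReach K T) C.toFinite ⟨s, hs⟩
  obtain ⟨t, htT, hat⟩ := hreach a ha
  have hpropagate : ∀ b, Relation.ReflTransGen (fun a b => K a b ≠ 0) a b →
      b ∈ C ∧ mcReach K T b = mcReach K T a := by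
    intro b hab
    induction hab with
    | refl => exact ⟨ha, rfl⟩
    | tail _ hbc ih =>
      exact ⟨hclosed _ ih.1 _ hbc,
        (mcReach_eq_of_forall_le hclosed ih.1 (ih.2 ▸ hmin) hbc).trans ih.2⟩
  have hmin_eq_one : mcReach K T a = 1 := (hpropagate t hat).2 ▸ mcReach_of_mem htT
  exact le_antisymm (mcReach_le_one s) (hmin_eq_one ▸ hmin s hs)

end mcReach

theorem bounded_ranking_wlog_general {S Act : Type} [Fintype S]
    (P : S → Act → PMF S) (REACH : Set S)
    (σ : S → Act) (C : Set S)
    (hclosed : ∀ s ∈ C, ∀ s', P s (σ s) s' ≠ 0 → s' ∈ C) :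
    -- (a) bounded paths to REACH within C imply almost-sure reachability
    ((∀ s ∈ C, ∃ n ≤ Fintype.card S, ∃ p : ℕ → S, p 0 = s ∧ p n ∈ REACH ∧
        ∀ i < n, p i ∈ C ∧ P (p i) (σ (p i)) (p (i + 1)) ≠ 0) →
      ∀ s ∈ C, mcReach (fun t => P t (σ t)) REACH s = 1) ∧
    -- (b) real-valued rankings can be replaced by rankings bounded by |S|
    ((∃ r : S → ℝ, ∀ s ∈ C, s ∉ REACH →
        ∃ s', P s (σ s) s' ≠ 0 ∧ r s > r s') ↔
      (∃ r : S → ℕ, (∀ s ∈ C, r s ≤ Fintype.card S) ∧ ∀ s ∈ C, s ∉ REACH →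
        ∃ s', P s (σ s) s' ≠ 0 ∧ r s > r s')) := by
  refine ⟨fun hpath => mcReach_eq_one_of_forall_reflTransGen hclosed fun s hs => ?_, ?_, ?_⟩
  · obtain ⟨n, -, p, rfl, hpn, hstep⟩ := hpath s hs
    exact ⟨p n, hpn, .of_path fun i hi => (hstep i hi).2⟩
  · rintro ⟨r, hr⟩
    refine ⟨fun s => #{u | r u < r s}, fun s _ => card_filter_le _ _, fun s hs hsR => ?_⟩
    obtain ⟨s', hss', hlt⟩ := hr s hs hsR
    exact ⟨s', hss', card_filter_lt_lt_card_filter_lt hlt⟩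
  · rintro ⟨r, -, hr⟩
    exact ⟨fun s => r s, fun s hs hsR =>
      (hr s hs hsR).imp fun _ h => ⟨h.1, Nat.cast_lt.mpr h.2⟩⟩

/-- In a finite MDP with memoryless policy `σ` and reached set `C`
(closed under successors and disjoint from AVOID):
(a) if every state of `C` has a path of length at most `|S|` within `C` to
REACH, then REACH is reached almost surely from every state of `C`; and
(b) the bound `|S|` on ranks is without loss of generality: a real-valued
ranking function on `C` exists iff one with values in `{0, …, |S|}` exists. -/
theorem bounded_ranking_wlog {S Act : Type} [Fintype S] [Fintype Act]
    (P : S → Act → PMF S) (REACH AVOID : Set S)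
    (hdisj : Disjoint REACH AVOID)
    (hR : ∀ s ∈ REACH, ∀ α, P s α = PMF.pure s)
    (hA : ∀ s ∈ AVOID, ∀ α, P s α = PMF.pure s)
    (σ : S → Act) (C : Set S)
    (havoid : C ∩ AVOID = ∅)
    (hclosed : ∀ s ∈ C, ∀ s', P s (σ s) s' ≠ 0 → s' ∈ C) :
    -- (a) bounded paths to REACH within C imply almost-sure reachability
    ((∀ s ∈ C, ∃ n ≤ Fintype.card S, ∃ p : ℕ → S, p 0 = s ∧ p n ∈ REACH ∧
        ∀ i < n, p i ∈ C ∧ P (p i) (σ (p i)) (p (i + 1)) ≠ 0) →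
      ∀ s ∈ C, mcReach (fun t => P t (σ t)) REACH s = 1) ∧
    -- (b) real-valued rankings can be replaced by rankings bounded by |S|
    ((∃ r : S → ℝ, ∀ s ∈ C, s ∉ REACH →
        ∃ s', P s (σ s) s' ≠ 0 ∧ r s > r s') ↔
      (∃ r : S → ℕ, (∀ s ∈ C, r s ≤ Fintype.card S) ∧ ∀ s ∈ C, s ∉ REACH →
        ∃ s', P s (σ s) s' ≠ 0 ∧ r s > r s')) :=
  bounded_ranking_wlog_general P REACH σ C hclosed
end

section
/- The support map commutes with belief update: if beliefs b₁ and b₂ have the same support, then for every action α and observation z, P(b₁,α,z) > 0 iff P(b₂,α,z) > 0, and in that case supp(⟦b₁|α,z⟧) = supp(⟦b₂|α,z⟧). -/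
open scoped ENNReal Classical

namespace POMDP

variable {S Act Ω : Type}

/-- `P(b, α, z)`: the probability to observe `z` after taking `α` in belief `b`. -/
noncomputable def obsProb (M : POMDP S Act Ω) (b : PMF S) (α : Act) (z : Ω) : ℝ≥0∞ :=
  ∑' s : S, b s * ∑' s' : S, (if M.obs s' = z then M.P s α s' else 0)

/-- `⟦b | α, z⟧`: the belief obtained by taking `α` from `b`, conditioned on
observing `z`. -/
noncomputable def beliefUpdate (M : POMDP S Act Ω) (b : PMF S) (α : Act) (z : Ω)
    (s' : S) : ℝ≥0∞ :=
  (if M.obs s' = z then ∑' s : S, b s * M.P s α s' else 0) / M.obsProb b α z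

end POMDP

/-! Both claims reduce to one observation: whether a weighted sum `∑' s, b s * f s` vanishes
depends on the weights `b` only through their support. -/

namespace PMF

variable {α : Type*}

theorem tsum_mul_ne_zero_iff (p : PMF α) (f : α → ℝ≥0∞) :
    ∑' a, p a * f a ≠ 0 ↔ ∃ a ∈ p.support, f a ≠ 0 := by
  simp only [Ne, ENNReal.tsum_eq_zero, mul_eq_zero, not_forall, not_or, mem_support_iff]

theorem tsum_mul_ne_zero_congr {p q : PMF α} (h : p.support = q.support) (f : α → ℝ≥0∞) :
    ∑' a, p a * f a ≠ 0 ↔ ∑' a, q a * f a ≠ 0 := by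
  rw [tsum_mul_ne_zero_iff, tsum_mul_ne_zero_iff, h]

theorem tsum_mul_le_one (p : PMF α) {f : α → ℝ≥0∞} (hf : ∀ a, f a ≤ 1) :
    ∑' a, p a * f a ≤ 1 :=
  calc ∑' a, p a * f a ≤ ∑' a, p a :=
        ENNReal.tsum_le_tsum fun a => mul_le_of_le_one_right' (hf a)
    _ = 1 := p.tsum_coe

theorem tsum_ite_le_one (p : PMF α) (q : α → Prop) [DecidablePred q] :
    ∑' a, (if q a then p a else 0) ≤ 1 :=
  calc ∑' a, (if q a then p a else 0) ≤ ∑' a, p a :=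
        ENNReal.tsum_le_tsum fun a => by split_ifs <;> simp
    _ = 1 := p.tsum_coe

end PMF

namespace POMDP

variable {S Act Ω : Type} (M : POMDP S Act Ω)

theorem obsProb_le_one (b : PMF S) (α : Act) (z : Ω) : M.obsProb b α z ≤ 1 :=
  b.tsum_mul_le_one fun s => (M.P s α).tsum_ite_le_one (M.obs · = z)

theorem obsProb_ne_zero_congr {b₁ b₂ : PMF S} (h : b₁.support = b₂.support)
    (α : Act) (z : Ω) :
    M.obsProb b₁ α z ≠ 0 ↔ M.obsProb b₂ α z ≠ 0 :=
  PMF.tsum_mul_ne_zero_congr h _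

/-- This holds even when `obsProb b α z = 0`, since `x / 0 = ⊤` in `ℝ≥0∞` for `x ≠ 0`. -/
theorem beliefUpdate_ne_zero_iff (b : PMF S) (α : Act) (z : Ω) (s' : S) :
    M.beliefUpdate b α z s' ≠ 0 ↔ M.obs s' = z ∧ ∑' s, b s * M.P s α s' ≠ 0 := by
  have hfin : M.obsProb b α z ≠ ⊤ :=
    ne_top_of_le_ne_top ENNReal.one_ne_top (M.obsProb_le_one b α z)
  simp only [beliefUpdate, Ne, ENNReal.div_eq_zero_iff, hfin, or_false, ite_eq_right_iff,
    not_forall, exists_prop]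

theorem beliefUpdate_support_congr {b₁ b₂ : PMF S} (h : b₁.support = b₂.support)
    (α : Act) (z : Ω) :
    {s' | M.beliefUpdate b₁ α z s' ≠ 0} = {s' | M.beliefUpdate b₂ α z s' ≠ 0} := by
  ext s'
  simp only [Set.mem_ofPred, beliefUpdate_ne_zero_iff, PMF.tsum_mul_ne_zero_congr h]

end POMDP

theorem belief_update_support_congr_general {S Act Ω : Type}
    (M : POMDP S Act Ω) (b₁ b₂ : PMF S)
    (hsupp : b₁.support = b₂.support) (α : Act) (z : Ω) :
    (M.obsProb b₁ α z ≠ 0 ↔ M.obsProb b₂ α z ≠ 0) ∧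
    (M.obsProb b₁ α z ≠ 0 →
      {s' | M.beliefUpdate b₁ α z s' ≠ 0} = {s' | M.beliefUpdate b₂ α z s' ≠ 0}) :=
  ⟨M.obsProb_ne_zero_congr hsupp α z, fun _ => M.beliefUpdate_support_congr hsupp α z⟩

/-- The support map commutes with belief update: beliefs with the
same support have the same positive-observation-probabilities, and in that case
their updated beliefs have the same support. -/
theorem belief_update_support_congr {S Act Ω : Type} [Fintype S]
    (M : POMDP S Act Ω) (b₁ b₂ : PMF S)
    (hsupp : b₁.support = b₂.support) (α : Act) (z : Ω) :
    (M.obsProb b₁ α z ≠ 0 ↔ M.obsProb b₂ α z ≠ 0) ∧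
    (M.obsProb b₁ α z ≠ 0 →
      {s' | M.beliefUpdate b₁ α z s' ≠ 0} = {s' | M.beliefUpdate b₂ α z s' ≠ 0}) :=
  belief_update_support_congr_general M b₁ b₂ hsupp α z
end
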